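/- Let G be a group, n ≥ 2, and let χ_1, …, χ_n : G → ℝ_{>0} be group homomorphisms into the multiplicative group of positive reals such that χ_1(g) · χ_2(g) ⋯ χ_n(g) = 1 for every g ∈ G. Define φ : G → ℝ^{n-1} by φ(g) = (log χ_1(g), …, log χ_{n-1}(g)), and assume that the image φ(G) spans ℝ^{n-1} as a real vector space. Then for every nonempty subset S ⊆ {1, …, n} with at most n−1 elements, there exists g ∈ G with χ_i(g) > 1 for every i ∈ S. -/

import Mathlib

/-- Character-theoretic claim from the proof of Lemma 3.7: given positive real
characters `χ_1, …, χ_n` of a group `G` with `χ_1 ⋯ χ_n = 1` whose logarithms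
`φ = (log χ_1, …, log χ_{n-1})` span `ℝ^{n-1}`, for every nonempty index set `S`
of size at most `n-1` there is `g ∈ G` with `χ_i(g) > 1` for all `i ∈ S`. -/
theorem exists_element_with_large_characters
    (G : Type*) [Group G] (n : ℕ) (hn : 2 ≤ n)
    (χ : Fin n → (G →* ℝ)) (hpos : ∀ (i : Fin n) (g : G), 0 < χ i g)
    (hprod : ∀ g : G, ∏ i, χ i g = 1)
    (φ : G → (Fin (n - 1) → ℝ))
    (hφ : ∀ (g : G) (i : Fin (n - 1)),
      φ g i = Real.log (χ (Fin.castLE (Nat.sub_le n 1) i) g))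
    (hspan : Submodule.span ℝ (Set.range φ) = ⊤)
    (S : Finset (Fin n)) (hS : S.Nonempty) (hcard : S.card ≤ n - 1) :
    ∃ g : G, ∀ i ∈ S, 1 < χ i g := by
  obtain ⟨m, rfl⟩ : ∃ m, n = m + 1 := ⟨n - 1, by omega⟩
  have hm : 1 ≤ m := by omega
  set emb : Fin m → Fin (m + 1) := Fin.castLE (Nat.sub_le (m + 1) 1) with hemb
  have hembinj : Function.Injective emb := Fin.castLE_injective _
  -- a finite spanning subset of the image of φ
  obtain ⟨b, hb_sub, hb_span, hb_ind⟩ := exists_linearIndependent ℝ (Set.range φ)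
  rw [hspan] at hb_span
  have hfin : b.Finite := hb_ind.setFinite
  have : Fintype b := hfin.fintype
  have hchoice : ∀ j : b, ∃ g : G, φ g = j.1 := fun j => hb_sub j.2
  choose gg hgg using hchoice
  set v : b → (Fin m → ℝ) := fun j => j.1 with hv
  -- target vector
  set t : Fin m → ℝ := fun i => if emb i ∈ S then 1 else -(m + 2 : ℝ) with ht
  have ht_le : ∀ i, t i ≤ 1 := by
    intro i
    by_cases h : emb i ∈ S <;> simp [ht, h]
    linarith [Nat.cast_nonneg (α := ℝ) m]
  have hsum_t : Fin.last m ∈ S → ∑ i, t i ≤ -3 := by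
    intro hlast
    obtain ⟨i0, hi0⟩ : ∃ i0 : Fin m, emb i0 ∉ S := by
      by_contra h
      push_neg at h
      have hsub : insert (Fin.last m) (Finset.univ.image emb) ⊆ S := by
        intro x hx
        simp only [Finset.mem_insert, Finset.mem_image, Finset.mem_univ, true_and] at hx
        rcases hx with rfl | ⟨i, rfl⟩
        · exact hlast
        · exact h i
      have hnotmem : Fin.last m ∉ Finset.univ.image emb := by
        simp only [Finset.mem_image, Finset.mem_univ, true_and, not_exists]
        intro i hEq
        have := congrArg Fin.val hEq
        simp [hemb, Fin.last] at this
        omega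
      have hcard2 : m + 1 ≤ S.card := by
        have h1 := Finset.card_le_card hsub
        rw [Finset.card_insert_of_notMem hnotmem,
          Finset.card_image_of_injective _ hembinj] at h1
        simpa using h1
      omega
    have hti0 : t i0 = -(m + 2 : ℝ) := by simp [ht, hi0]
    have hsplit : ∑ i, t i = t i0 + ∑ i ∈ Finset.univ.erase i0, t i :=
      (Finset.add_sum_erase _ _ (Finset.mem_univ i0)).symm
    have hbound : ∑ i ∈ Finset.univ.erase i0, t i ≤ (m - 1 : ℝ) := by
      have h1 : ∑ i ∈ Finset.univ.erase i0, t i ≤ ∑ _i ∈ Finset.univ.erase i0, (1 : ℝ) :=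
        Finset.sum_le_sum fun i _ => ht_le i
      have h2 : ∑ _i ∈ Finset.univ.erase i0, (1 : ℝ) = ((m - 1 : ℕ) : ℝ) := by
        rw [Finset.sum_const, Finset.card_erase_of_mem (Finset.mem_univ i0)]
        simp
      rw [h2] at h1
      refine h1.trans ?_
      push_cast [Nat.cast_sub hm]
      simp
    rw [hsplit, hti0]
    have : (1 : ℝ) ≤ m := by exact_mod_cast hm
    linarith
  -- lattice approximation
  set R : ℝ := ∑ j : b, ∑ i, |v j i| with hR
  have hR0 : 0 ≤ R :=
    Finset.sum_nonneg fun j _ => Finset.sum_nonneg fun i _ => abs_nonneg _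
  set lam : ℝ := R + 1 with hlam
  have hx : lam • t ∈ Submodule.span ℝ (Set.range v) := by
    have hrange : Set.range v = b := Subtype.range_val
    rw [hrange, hb_span]
    trivial
  obtain ⟨c, hc⟩ := (Submodule.mem_span_range_iff_exists_fun ℝ).mp hx
  set k : b → ℤ := fun j => ⌊c j⌋ with hk
  set p : Fin m → ℝ := ∑ j : b, (k j : ℝ) • v j with hp
  have herr : ∀ i, |p i - lam * t i| ≤ ∑ j : b, |v j i| := by
    intro i
    have hdiff : p i - lam * t i = ∑ j : b, ((k j : ℝ) - c j) * v j i := by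
      have h1 : p i = ∑ j : b, (k j : ℝ) * v j i := by
        rw [hp, Finset.sum_apply]
        simp [smul_eq_mul]
      have h2 : lam * t i = ∑ j : b, c j * v j i := by
        have := congrFun hc i
        rw [Finset.sum_apply] at this
        simp only [Pi.smul_apply, smul_eq_mul] at this
        rw [← this]
      rw [h1, h2, ← Finset.sum_sub_distrib]
      congr 1; ext j; ring
    rw [hdiff]
    refine (Finset.abs_sum_le_sum_abs _ _).trans (Finset.sum_le_sum fun j _ => ?_)
    rw [abs_mul]
    have h3 : |(k j : ℝ) - c j| ≤ 1 := by
      have h4 := Int.floor_le (c j)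
      have h5 := Int.sub_one_lt_floor (c j)
      rw [abs_le]
      constructor <;> simp only [hk] <;> linarith
    calc |(k j : ℝ) - c j| * |v j i| ≤ 1 * |v j i| :=
          mul_le_mul_of_nonneg_right h3 (abs_nonneg _)
      _ = |v j i| := one_mul _
  have herrR : ∀ i, |p i - lam * t i| ≤ R := by
    intro i
    refine (herr i).trans (Finset.sum_le_sum fun j _ => ?_)
    exact Finset.single_le_sum (f := fun i' => |v j i'|) (fun i' _ => abs_nonneg _) (Finset.mem_univ i)
  have herrSum : ∑ i, |p i - lam * t i| ≤ R := by
    have hsw : ∑ i : Fin m, ∑ j : b, |v j i| = ∑ j : b, ∑ i : Fin m, |v j i| :=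
      Finset.sum_comm
    rw [hR]
    exact (Finset.sum_le_sum fun i _ => herr i).trans hsw.le
  -- the group element
  set g : G := ((Finset.univ : Finset b).toList.map (fun j => gg j ^ k j)).prod with hg
  have hlog : ∀ i : Fin m, Real.log (χ (emb i) g) = p i := by
    intro i
    rw [hg, map_list_prod, List.map_map, Finset.prod_map_toList]
    rw [Real.log_prod (fun j _ => by
      simp only [Function.comp_apply, map_zpow]
      exact ne_of_gt (zpow_pos (hpos _ _) _))]
    rw [hp, Finset.sum_apply]
    refine Finset.sum_congr rfl fun j _ => ?_
    simp only [Function.comp_apply, map_zpow, Real.log_zpow]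
    have := hφ (gg j) i
    rw [hgg j] at this
    simp only [Pi.smul_apply, smul_eq_mul]
    rw [← this]
  refine ⟨g, fun i hi => ?_⟩
  have hlog_pos : 0 < Real.log (χ i g) := by
    by_cases hcase : (i : ℕ) < m
    · -- i is one of the first m indices
      set i' : Fin m := ⟨i, hcase⟩ with hi'
      have hie : emb i' = i := by
        apply Fin.ext; rfl
      have hti' : t i' = 1 := by rw [ht]; simp only [hie]; simp [hi]
      have hpi : 0 < p i' := by
        have := herrR i'
        rw [abs_le] at this
        have hlt : lam * t i' - R ≤ p i' := by linarith [this.1]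
        rw [hti'] at hlt
        have : lam * 1 - R = 1 := by rw [hlam]; ring
        linarith
      rw [← hie, hlog i']
      exact hpi
    · -- i is the last index
      have hilast : i = Fin.last m := by
        apply Fin.ext
        have := i.isLt
        simp only [Fin.last]
        omega
      have hzero : ∑ j : Fin (m + 1), Real.log (χ j g) = 0 := by
        rw [← Real.log_prod (fun j _ => ne_of_gt (hpos j g)), hprod, Real.log_one]
      rw [Fin.sum_univ_castSucc] at hzero
      have hcastv : ∀ i' : Fin m, Fin.castSucc i' = emb i' := fun i' => rfl
      have hsum_p : ∑ i' : Fin m, Real.log (χ (Fin.castSucc i') g) = ∑ i' : Fin m, p i' := by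
        refine Finset.sum_congr rfl fun i' _ => ?_
        rw [hcastv i', hlog i']
      rw [hsum_p] at hzero
      have hpneg : ∑ i' : Fin m, p i' < 0 := by
        have h1 : ∑ i' : Fin m, p i' ≤ ∑ i' : Fin m, (lam * t i') + R := by
          have h2 : ∑ i' : Fin m, (p i' - lam * t i') ≤ R := by
            refine le_trans (Finset.sum_le_sum fun i' _ => le_abs_self _) herrSum
          rw [Finset.sum_sub_distrib] at h2
          linarith
        have h3 : ∑ i' : Fin m, (lam * t i') = lam * ∑ i', t i' := by
          rw [Finset.mul_sum]
        have h4 : ∑ i', t i' ≤ -3 := hsum_t (hilast ▸ hi)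
        have h5 : lam * ∑ i', t i' ≤ lam * (-3) := by
          have hlampos : 0 < lam := by rw [hlam]; linarith
          nlinarith
        rw [h3] at h1
        have : lam * (-3) + R < 0 := by rw [hlam]; ring_nf; linarith
        linarith
      rw [hilast]
      linarith
  exact (Real.log_pos_iff (hpos i g).le).mp hlog_pos
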